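/- arXiv:nlin/0511071 — 5 statements merged into one kernel-verified Lean document; each statement's English description precedes it below -/
import Mathlib

section
/- Assume V : ℝ^d → ℝ is continuously differentiable with ‖∇V(x)‖ ≤ m for all x and ‖∇V(x) − ∇V(y)‖ ≤ m‖x − y‖ for all x, y (for some m > 0). Let (q(t), p(t)) be a solution of q̇ = p, ṗ = −∇V(q) defined on [0,T] with q(0) = q₀, p(0) = p₀. Then for every t ∈ [0,T]: ‖p(t) − p₀ + ∫₀ᵗ ∇V(q₀ + p₀ s) ds‖ ≤ m² t³ / 6, and ‖q(t) − q₀ − p₀ t − ∫₀ᵗ ∇V(q₀ + p₀ s)(s − t) ds‖ ≤ m² t⁴ / 24. -/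
open Set MeasureTheory

/-! Differentiating each error term gives an estimate driven by the previous one: `‖ṗ‖ ≤ m`
yields `‖p t - p₀‖ ≤ m t`, hence `‖q t - q₀ - t p₀‖ ≤ m t² / 2`; the Lipschitz bound turns this
into `m² t² / 2` for the derivative of the momentum error, and the derivative of the position
error is the momentum error. Each step is the comparison principle `‖f t - f 0‖ ≤ C tⁿ⁺¹ / (n + 1)`
when `‖f' t‖ ≤ C tⁿ`, so nothing about the integrability of the solution is needed. -/

variable {E : Type*} [NormedAddCommGroup E] [NormedSpace ℝ E]

theorem norm_sub_le_of_norm_deriv_le_mul_pow {f f' : ℝ → E} {T C : ℝ} (n : ℕ)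
    (hf : ∀ t ∈ Icc 0 T, HasDerivAt f (f' t) t)
    (hf' : ∀ t ∈ Icc 0 T, ‖f' t‖ ≤ C * t ^ n) :
    ∀ t ∈ Icc 0 T, ‖f t - f 0‖ ≤ C * t ^ (n + 1) / (n + 1) := by
  have hB (t : ℝ) : HasDerivAt (fun t => C * t ^ (n + 1) / (n + 1)) (C * t ^ n) t := by
    refine (((hasDerivAt_pow (n + 1) t).const_mul C).div_const _).congr_deriv ?_
    push_cast
    field_simp
  exact image_norm_le_of_norm_deriv_right_le_deriv_boundary (f := fun t => f t - f 0)
    (fun t ht => ((hf t ht).continuousAt.sub continuousAt_const).continuousWithinAt)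
    (fun t ht => ((hf t (Ico_subset_Icc_self ht)).sub_const (f 0)).hasDerivWithinAt)
    (by simp) hB (fun t ht => hf' t (Ico_subset_Icc_self ht))

theorem hasDerivAt_integral_sub_smul [CompleteSpace E] {g : ℝ → E} (hg : Continuous g) (a t : ℝ) :
    HasDerivAt (fun t => ∫ s in a..t, (s - t) • g s) (-∫ s in a..t, g s) t := by
  have hsg : Continuous fun s : ℝ => s • g s := continuous_id.smul hg
  have hsplit : (fun t => ∫ s in a..t, (s - t) • g s)
      = fun t => (∫ s in a..t, s • g s) - t • ∫ s in a..t, g s := by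
    funext t
    simp only [sub_smul]
    rw [intervalIntegral.integral_sub (g := fun s => t • g s) (hsg.intervalIntegrable _ _)
      ((hg.const_smul t).intervalIntegrable _ _), intervalIntegral.integral_smul]
  rw [hsplit]
  refine ((hsg.integral_hasStrictDerivAt a t).hasDerivAt.sub
    ((hasDerivAt_id' t).smul (hg.integral_hasStrictDerivAt a t).hasDerivAt)).congr_deriv ?_
  rw [one_smul]
  abel

namespace NewtonFlow

variable {F : E → E} {m T : ℝ} {q p : ℝ → E}

theorem norm_momentum_sub_le (hF : ∀ x, ‖F x‖ ≤ m)
    (hp : ∀ t ∈ Icc 0 T, HasDerivAt p (-F (q t)) t) :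
    ∀ t ∈ Icc 0 T, ‖p t - p 0‖ ≤ m * t := by
  simpa using norm_sub_le_of_norm_deriv_le_mul_pow 0 hp (fun t _ => by simpa using hF (q t))

theorem norm_position_sub_freeFlight_le (hF : ∀ x, ‖F x‖ ≤ m)
    (hq : ∀ t ∈ Icc 0 T, HasDerivAt q (p t) t)
    (hp : ∀ t ∈ Icc 0 T, HasDerivAt p (-F (q t)) t) :
    ∀ t ∈ Icc 0 T, ‖q t - q 0 - t • p 0‖ ≤ m * t ^ 2 / 2 := by
  have hderiv (t) (ht : t ∈ Icc 0 T) :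
      HasDerivAt (fun t => q t - t • p 0) (p t - p 0) t := by
    exact ((hq t ht).sub ((hasDerivAt_id' t).smul_const (p 0))).congr_deriv (by rw [one_smul])
  intro t ht
  convert norm_sub_le_of_norm_deriv_le_mul_pow 1 hderiv
    (fun t ht => by simpa using norm_momentum_sub_le hF hp t ht) t ht using 1
  · rw [zero_smul, sub_zero, sub_right_comm]
  · norm_num

theorem norm_momentum_sub_picard_le [CompleteSpace E] (hF : ∀ x, ‖F x‖ ≤ m)
    (hFlip : ∀ x y, ‖F x - F y‖ ≤ m * ‖x - y‖)
    (hq : ∀ t ∈ Icc 0 T, HasDerivAt q (p t) t)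
    (hp : ∀ t ∈ Icc 0 T, HasDerivAt p (-F (q t)) t) :
    ∀ t ∈ Icc 0 T, ‖p t - p 0 + ∫ s in (0:ℝ)..t, F (q 0 + s • p 0)‖ ≤ m ^ 2 * t ^ 3 / 6 := by
  have hFc : Continuous F :=
    (LipschitzWith.of_dist_le' (by simpa only [dist_eq_norm] using hFlip)).continuous
  have hg : Continuous fun s : ℝ => F (q 0 + s • p 0) := by fun_prop
  have hderiv (t) (ht : t ∈ Icc 0 T) : HasDerivAt (fun t => p t + ∫ s in (0:ℝ)..t, F (q 0 + s • p 0))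
      (F (q 0 + t • p 0) - F (q t)) t :=
    ((hp t ht).add (hg.integral_hasStrictDerivAt 0 t).hasDerivAt).congr_deriv (neg_add_eq_sub _ _)
  have hm : 0 ≤ m := (norm_nonneg _).trans (hF 0)
  have hbound (t) (ht : t ∈ Icc 0 T) : ‖F (q 0 + t • p 0) - F (q t)‖ ≤ m ^ 2 / 2 * t ^ 2 :=
    calc ‖F (q 0 + t • p 0) - F (q t)‖ ≤ m * ‖q t - q 0 - t • p 0‖ := by
          rw [norm_sub_rev, sub_sub]
          exact hFlip _ _
      _ ≤ m * (m * t ^ 2 / 2) :=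
          mul_le_mul_of_nonneg_left (norm_position_sub_freeFlight_le hF hq hp t ht) hm
      _ = m ^ 2 / 2 * t ^ 2 := by ring
  intro t ht
  convert norm_sub_le_of_norm_deriv_le_mul_pow 2 hderiv hbound t ht using 1
  · rw [intervalIntegral.integral_same, add_zero, sub_add_eq_add_sub]
  · norm_num
    ring

theorem norm_position_sub_picard_le [CompleteSpace E] (hF : ∀ x, ‖F x‖ ≤ m)
    (hFlip : ∀ x y, ‖F x - F y‖ ≤ m * ‖x - y‖)
    (hq : ∀ t ∈ Icc 0 T, HasDerivAt q (p t) t)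
    (hp : ∀ t ∈ Icc 0 T, HasDerivAt p (-F (q t)) t) :
    ∀ t ∈ Icc 0 T, ‖q t - q 0 - t • p 0 - ∫ s in (0:ℝ)..t, (s - t) • F (q 0 + s • p 0)‖
      ≤ m ^ 2 * t ^ 4 / 24 := by
  have hFc : Continuous F :=
    (LipschitzWith.of_dist_le' (by simpa only [dist_eq_norm] using hFlip)).continuous
  have hg : Continuous fun s : ℝ => F (q 0 + s • p 0) := by fun_prop
  have hderiv (t) (ht : t ∈ Icc 0 T) :
      HasDerivAt (fun t => q t - t • p 0 - ∫ s in (0:ℝ)..t, (s - t) • F (q 0 + s • p 0))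
        (p t - p 0 + ∫ s in (0:ℝ)..t, F (q 0 + s • p 0)) t :=
    (((hq t ht).sub ((hasDerivAt_id' t).smul_const (p 0))).sub
      (hasDerivAt_integral_sub_smul hg 0 t)).congr_deriv (by rw [one_smul, sub_neg_eq_add])
  intro t ht
  convert norm_sub_le_of_norm_deriv_le_mul_pow (C := m ^ 2 / 6) 3 hderiv
    (fun t ht => (norm_momentum_sub_picard_le hF hFlip hq hp t ht).trans_eq (by ring)) t ht using 1
  · rw [zero_smul, sub_zero, intervalIntegral.integral_same, sub_zero]
    congr 1
    abel
  · norm_num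
    ring

end NewtonFlow

theorem stmt_1_general (d : ℕ) (m : ℝ)
    (V : EuclideanSpace ℝ (Fin d) → ℝ)
    (hbound : ∀ x, ‖gradient V x‖ ≤ m)
    (hlip : ∀ x y, ‖gradient V x - gradient V y‖ ≤ m * ‖x - y‖)
    (T : ℝ)
    (q p : ℝ → EuclideanSpace ℝ (Fin d)) (q₀ p₀ : EuclideanSpace ℝ (Fin d))
    (hq : ∀ t ∈ Set.Icc (0:ℝ) T, HasDerivAt q (p t) t)
    (hp : ∀ t ∈ Set.Icc (0:ℝ) T, HasDerivAt p (-gradient V (q t)) t)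
    (hq0 : q 0 = q₀) (hp0 : p 0 = p₀) :
    ∀ t ∈ Set.Icc (0:ℝ) T,
      ‖p t - p₀ + ∫ s in (0:ℝ)..t, gradient V (q₀ + s • p₀)‖ ≤ m^2 * t^3 / 6 ∧
      ‖q t - q₀ - t • p₀ - ∫ s in (0:ℝ)..t, (s - t) • gradient V (q₀ + s • p₀)‖
        ≤ m^2 * t^4 / 24 := by
  subst hq0 hp0
  exact fun t ht => ⟨NewtonFlow.norm_momentum_sub_picard_le hbound hlip hq hp t ht,
    NewtonFlow.norm_position_sub_picard_le hbound hlip hq hp t ht⟩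

/-- **First-order (Picard) approximation of the Hamiltonian free flight.**
If `‖∇V‖ ≤ m` everywhere and `∇V` is `m`-Lipschitz, then any solution of
`q' = p`, `p' = -∇V(q)` is approximated to order `m²` by the straight-line motion
corrected by the force integrated along the straight line. -/
theorem stmt_1 (d : ℕ) (hd : 1 ≤ d) (m : ℝ) (hm : 0 < m)
    (V : EuclideanSpace ℝ (Fin d) → ℝ) (hV : ContDiff ℝ 1 V)
    (hbound : ∀ x, ‖gradient V x‖ ≤ m)
    (hlip : ∀ x y, ‖gradient V x - gradient V y‖ ≤ m * ‖x - y‖)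
    (T : ℝ) (hT : 0 ≤ T)
    (q p : ℝ → EuclideanSpace ℝ (Fin d)) (q₀ p₀ : EuclideanSpace ℝ (Fin d))
    (hq : ∀ t ∈ Set.Icc (0:ℝ) T, HasDerivAt q (p t) t)
    (hp : ∀ t ∈ Set.Icc (0:ℝ) T, HasDerivAt p (-gradient V (q t)) t)
    (hq0 : q 0 = q₀) (hp0 : p 0 = p₀) :
    ∀ t ∈ Set.Icc (0:ℝ) T,
      ‖p t - p₀ + ∫ s in (0:ℝ)..t, gradient V (q₀ + s • p₀)‖ ≤ m^2 * t^3 / 6 ∧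
      ‖q t - q₀ - t • p₀ - ∫ s in (0:ℝ)..t, (s - t) • gradient V (q₀ + s • p₀)‖
        ≤ m^2 * t^4 / 24 :=
  stmt_1_general d m V hbound hlip T q p q₀ p₀ hq hp hq0 hp0
end

section
/- Let C > 0, δ > 0 and T ≥ 0. Let f : [0,T] → ℝ be twice continuously differentiable with f(0) = 0, f''(t) ≥ C for all t ∈ [0,T], and f(t) ≤ δ for all t ∈ [0,T]. Then T ≤ 2|f'(0)|/C + 2√(2δ/C). -/
open Set

/-
The lower bound `f'' ≥ C` integrates twice: first `f' t ≥ f' 0 + C t`, then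
`f T ≥ f' 0 T + C T² / 2`. Since `f T ≤ δ`, the quadratic `f' 0 T + C T² / 2` is at most `δ`,
whereas for `T > 2|f' 0|/C + 2√(2δ/C)` it is at least `(C T / 2 - |f' 0|) T > C √(2δ/C) T ≥ 4δ`.
-/

theorem sub_le_sub_of_hasDerivAt_le {g h g' h' : ℝ → ℝ} {a b : ℝ} (hab : a ≤ b)
    (hg : ∀ t ∈ Icc a b, HasDerivAt g (g' t) t) (hh : ∀ t ∈ Icc a b, HasDerivAt h (h' t) t)
    (hle : ∀ t ∈ Icc a b, h' t ≤ g' t) :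
    h b - h a ≤ g b - g a := by
  have hderiv : ∀ t ∈ Icc a b, HasDerivAt (g - h) (g' t - h' t) t :=
    fun t ht => (hg t ht).sub (hh t ht)
  have hmono : MonotoneOn (g - h) (Icc a b) := by
    refine monotoneOn_of_deriv_nonneg (convex_Icc a b)
      (fun t ht => (hderiv t ht).continuousAt.continuousWithinAt)
      (fun t ht => ?_) (fun t ht => ?_) <;> rw [interior_Icc] at ht
    · exact (hderiv t (Ioo_subset_Icc_self ht)).differentiableAt.differentiableWithinAt
    · rw [(hderiv t (Ioo_subset_Icc_self ht)).deriv, sub_nonneg]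
      exact hle t (Ioo_subset_Icc_self ht)
  have := hmono (left_mem_Icc.2 hab) (right_mem_Icc.2 hab) hab
  simp only [Pi.sub_apply] at this
  linarith

theorem le_two_mul_abs_div_add_two_mul_sqrt_of_mul_add_sq_le {a C δ T : ℝ} (hC : 0 < C)
    (hδ : 0 ≤ δ) (hT : 0 ≤ T) (h : a * T + C * T ^ 2 / 2 ≤ δ) :
    T ≤ 2 * |a| / C + 2 * √(2 * δ / C) := by
  set s := √(2 * δ / C)
  have hs : 0 ≤ s := Real.sqrt_nonneg _
  have hCs : C * s ^ 2 = 2 * δ := by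
    rw [Real.sq_sqrt (by positivity)]; field_simp
  by_contra! hlt
  have hCT : 2 * |a| + 2 * C * s < C * T := by
    have := mul_lt_mul_of_pos_right hlt hC
    rw [add_mul, div_mul_cancel₀ _ hC.ne'] at this
    linarith
  have habs : 0 ≤ 2 * |a| / C := by positivity
  have hTs : 2 * s ≤ T := by linarith
  have hTpos : 0 < T := by linarith
  have hlead : 4 * δ < (C * T / 2 - |a|) * T := by
    calc 4 * δ = C * s * (2 * s) := by linarith
      _ ≤ C * s * T := by gcongr
      _ < (C * T / 2 - |a|) * T := by gcongr; linarith
  linarith [mul_le_mul_of_nonneg_right (neg_abs_le a) hT]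

theorem stmt_4_general (C δ T : ℝ) (hC : 0 < C) (hδ : 0 < δ) (hT : 0 ≤ T)
    (f f' f'' : ℝ → ℝ)
    (hf : ∀ t ∈ Set.Icc (0:ℝ) T, HasDerivAt f (f' t) t)
    (hf' : ∀ t ∈ Set.Icc (0:ℝ) T, HasDerivAt f' (f'' t) t)
    (h0 : f 0 = 0)
    (hlow : ∀ t ∈ Set.Icc (0:ℝ) T, C ≤ f'' t)
    (hup : ∀ t ∈ Set.Icc (0:ℝ) T, f t ≤ δ) :
    T ≤ 2 * |f' 0| / C + 2 * Real.sqrt (2 * δ / C) := by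
  have hslope : ∀ t ∈ Icc 0 T, f' 0 + C * t ≤ f' t := by
    intro t ht
    have hsub : Icc 0 t ⊆ Icc 0 T := Icc_subset_Icc_right ht.2
    have := sub_le_sub_of_hasDerivAt_le ht.1 (fun s hs => hf' s (hsub hs))
      (fun s _ => (hasDerivAt_id' s).const_mul C) (fun s hs => by simpa using hlow s (hsub hs))
    linarith
  have hquad : f' 0 * T + C * T ^ 2 / 2 ≤ f T := by
    have := sub_le_sub_of_hasDerivAt_le hT hf
      (fun t _ => (((hasDerivAt_id' t).const_mul (f' 0)).add
        (((hasDerivAt_pow 2 t).const_mul C).div_const 2)))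
      (fun t ht => by simpa [mul_div_assoc] using hslope t ht)
    simpa [h0] using this
  exact le_two_mul_abs_div_add_two_mul_sqrt_of_mul_add_sq_le hC hδ.le hT
    (hquad.trans (hup T (right_mem_Icc.2 hT)))

/-- **Escape-time estimate at a non-degenerate tangency.**
If `f(0) = 0`, `f'' ≥ C > 0` and `f ≤ δ` on `[0,T]`, then `T ≤ 2|f'(0)|/C + 2√(2δ/C)`. -/
theorem stmt_4 (C δ T : ℝ) (hC : 0 < C) (hδ : 0 < δ) (hT : 0 ≤ T)
    (f f' f'' : ℝ → ℝ)
    (hf : ∀ t ∈ Set.Icc (0:ℝ) T, HasDerivAt f (f' t) t)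
    (hf' : ∀ t ∈ Set.Icc (0:ℝ) T, HasDerivAt f' (f'' t) t)
    (hf''c : ContinuousOn f'' (Set.Icc 0 T))
    (h0 : f 0 = 0)
    (hlow : ∀ t ∈ Set.Icc (0:ℝ) T, C ≤ f'' t)
    (hup : ∀ t ∈ Set.Icc (0:ℝ) T, f t ≤ δ) :
    T ≤ 2 * |f' 0| / C + 2 * Real.sqrt (2 * δ / C) :=
  stmt_4_general C δ T hC hδ hT f f' f'' hf hf' h0 hlow hup
end

section
/- Fix an integer r ≥ 1. For ε ∈ (0,1) let W(Q;ε) = exp(−Q²/ε) for Q > 0; its inverse is 𝒬(w;ε) = √(ε ln(1/w)) for w ∈ (0,1). Set ν(ε) := (ε / ln(1/ε))^{1/(2(r+2))}, δ(ε) := √((r+2) ε ln(1/ε)), and η(ε) := 𝒬(ν(ε);ε). Then there exist C > 0 and ε₀ ∈ (0,1) such that for all ε ∈ (0,ε₀): M^{(r)}(ν(ε);ε) ≤ C ν(ε), max_{1 ≤ l ≤ r+1} |∂_Q^l W(Q;ε)|_{Q = δ(ε)} ≤ C ν(ε), and η(ε) ≤ √(ε ln(1/ε)). In particular ν(ε),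 δ(ε), η(ε) → 0 as ε → 0. -/
open Set Filter Topology

/-- `M^{(r)}(ν;ε)`: the supremum of `|∂_w^l 𝒬(w)|` over `ν ≤ w ≤ 1/2` and `0 ≤ l ≤ r+1`. -/
noncomputable def Mbig (Qinv : ℝ → ℝ) (r : ℕ) (ν : ℝ) : ℝ :=
  sSup {y : ℝ | ∃ l ≤ r + 1, ∃ w ∈ Set.Icc ν (1/2 : ℝ), y = |iteratedDeriv l Qinv w|}

/-- The inverse barrier function `𝒬(w;ε) = √(ε ln(1/w))` of the Gaussian barrier. -/
noncomputable def gaussQinv (ε : ℝ) : ℝ → ℝ := fun w => Real.sqrt (ε * Real.log (1 / w))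

/-- The Gaussian barrier function `W(Q;ε) = e^{-Q²/ε}`. -/
noncomputable def gaussW (ε : ℝ) : ℝ → ℝ := fun Q => Real.exp (-Q ^ 2 / ε)

/-- `ν(ε) = (ε / ln(1/ε))^{1/(2(r+2))}`. -/
noncomputable def nuGauss (r : ℕ) (ε : ℝ) : ℝ :=
  (ε / Real.log (1 / ε)) ^ ((1 : ℝ) / (2 * (r + 2)))

/-- `δ(ε) = √((r+2) ε ln(1/ε))`. -/
noncomputable def deltaGauss (r : ℕ) (ε : ℝ) : ℝ :=
  Real.sqrt (((r : ℝ) + 2) * ε * Real.log (1 / ε))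

/-- `η(ε) = 𝒬(ν(ε);ε)`. -/
noncomputable def etaGauss (r : ℕ) (ε : ℝ) : ℝ := gaussQinv ε (nuGauss r ε)

/-!
Write `L = log(1/ε)` and `c = 1/(2(r+2))`. Then `ν = ε^c L^{-c}`, so `ν^{r+2} = √(ε/L)` and
`c L ≤ log(1/ν) ≤ L`.

For `k ≥ 0`, `∂_w^{k+1} 𝒬 = √ε q_k(1/u) / (w^{k+1} √u)` with `u = log(1/w)` and explicit
polynomials `q_k`. On `[ν, 1/2]` we have `u ≥ log 2`, so the numerator is bounded. The denominator
`w^{k+1} √u` increases for `w ≤ e^{-1/2}`, so it is at least `ν^{r+1} √(cL)`. Hence every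
derivative is `O(√ε / (ν^{r+1} √L)) = O(ν)`.

The derivatives of `W` are Hermite polynomials times the Gaussian. At `Q = δ` the Gaussian equals
`ε^{r+2}`, which leaves `O(ε L^{r+1}) = o(ν)`. Finally `𝒬 ≤ η ≤ √(εL) = o(ν)` on `[ν, 1/2]`.
-/

open Polynomial Asymptotics

theorem Polynomial.abs_eval_le_sum_abs_coeff_mul (p : ℝ[X]) (x : ℝ) :
    |p.eval x| ≤ (∑ j ∈ Finset.range (p.natDegree + 1), |p.coeff j|) * max 1 |x| ^ p.natDegree := by
  rw [eval_eq_sum_range, Finset.sum_mul]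
  refine (Finset.abs_sum_le_sum_abs _ _).trans (Finset.sum_le_sum fun j hj => ?_)
  rw [abs_mul, abs_pow]
  refine mul_le_mul_of_nonneg_left ?_ (abs_nonneg _)
  exact (pow_le_pow_left₀ (abs_nonneg x) (le_max_right 1 |x|) j).trans
    (pow_le_pow_right₀ (le_max_left 1 |x|) (Nat.lt_succ_iff.mp (Finset.mem_range.mp hj)))

theorem tendsto_rpow_mul_log_inv_rpow {a : ℝ} (ha : 0 < a) (b : ℝ) :
    Tendsto (fun ε : ℝ => ε ^ a * Real.log (1 / ε) ^ b) (𝓝[>] 0) (𝓝 0) := by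
  refine ((isLittleO_log_rpow_rpow_atTop b ha).tendsto_div_nhds_zero.comp
    tendsto_inv_nhdsGT_zero).congr' ?_
  filter_upwards [self_mem_nhdsWithin] with ε (hε : 0 < ε)
  rw [Function.comp_apply, Real.inv_rpow hε.le, div_inv_eq_mul, mul_comm, one_div]

theorem tendsto_sqrt_mul_log_inv :
    Tendsto (fun ε : ℝ => Real.sqrt (ε * Real.log (1 / ε))) (𝓝[>] 0) (𝓝 0) := by
  have h := (tendsto_rpow_mul_log_inv_rpow one_pos 1).sqrt
  simpa only [Real.rpow_one, Real.sqrt_zero] using h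

theorem eventually_pos_and_one_le_log_inv : ∀ᶠ ε in 𝓝[>] (0 : ℝ), 0 < ε ∧ 1 ≤ Real.log (1 / ε) := by
  filter_upwards [Ioo_mem_nhdsGT (Real.exp_pos (-1))] with ε ⟨hε, hεe⟩
  refine ⟨hε, ?_⟩
  rw [Real.le_log_iff_exp_le (by positivity), le_div_iff₀ hε]
  calc Real.exp 1 * ε ≤ Real.exp 1 * Real.exp (-1) := by gcongr
    _ = 1 := by rw [← Real.exp_add, add_neg_cancel, Real.exp_zero]

theorem lt_one_of_one_le_log_inv {ε : ℝ} (hε : 0 < ε) (hL : 1 ≤ Real.log (1 / ε)) : ε < 1 := by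
  by_contra! h
  have : Real.log (1 / ε) ≤ 0 := Real.log_nonpos (by positivity) (div_le_one_of_le₀ h hε.le)
  linarith

theorem exists_Ioo_forall_of_eventually_nhdsGT {p : ℝ → Prop} (h : ∀ᶠ x in 𝓝[>] 0, p x) :
    ∃ ε₀ ∈ Ioo (0 : ℝ) 1, ∀ x ∈ Ioo 0 ε₀, p x := by
  obtain ⟨u, hu, hsub⟩ := mem_nhdsGT_iff_exists_Ioo_subset.mp h
  refine ⟨min u (1 / 2), ⟨lt_min hu (by norm_num), by linarith [min_le_right u (1 / 2)]⟩,
    fun x hx => hsub ⟨hx.1, hx.2.trans_le (min_le_left _ _)⟩⟩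

section nuGauss

variable (r : ℕ) {ε : ℝ}

theorem nuGauss_eq (hε : 0 < ε) (hL : 0 < Real.log (1 / ε)) :
    nuGauss r ε =
      ε ^ ((1 : ℝ) / (2 * (r + 2))) * Real.log (1 / ε) ^ (-((1 : ℝ) / (2 * (r + 2)))) := by
  rw [nuGauss, Real.div_rpow hε.le hL.le, Real.rpow_neg hL.le, div_eq_mul_inv]

theorem nuGauss_pos (hε : 0 < ε) (hL : 0 < Real.log (1 / ε)) : 0 < nuGauss r ε :=
  Real.rpow_pos_of_pos (div_pos hε hL) _

theorem isLittleO_nuGauss {a : ℝ} (ha : 1 / (2 * ((r : ℝ) + 2)) < a) (b : ℝ) :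
    (fun ε : ℝ => ε ^ a * Real.log (1 / ε) ^ b) =o[𝓝[>] 0] nuGauss r := by
  set c : ℝ := 1 / (2 * ((r : ℝ) + 2))
  have h := (isLittleO_one_iff ℝ).2 (tendsto_rpow_mul_log_inv_rpow (sub_pos.2 ha) (b + c))
  refine (h.mul_isBigO (isBigO_refl (nuGauss r) _)).congr' ?_ (by simp)
  filter_upwards [eventually_pos_and_one_le_log_inv] with ε ⟨hε, hL⟩
  have hL0 : 0 < Real.log (1 / ε) := by linarith
  rw [nuGauss_eq r hε hL0, mul_mul_mul_comm, ← Real.rpow_add hε, ← Real.rpow_add hL0,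
    sub_add_cancel, add_neg_cancel_right]

theorem tendsto_nuGauss : Tendsto (nuGauss r) (𝓝[>] 0) (𝓝 0) := by
  have hc : (0 : ℝ) < 1 / (2 * (r + 2)) := by positivity
  refine (tendsto_rpow_mul_log_inv_rpow hc (-((1 : ℝ) / (2 * (r + 2))))).congr' ?_
  filter_upwards [eventually_pos_and_one_le_log_inv] with ε ⟨hε, hL⟩
  exact (nuGauss_eq r hε (by linarith)).symm

theorem nuGauss_pow (hε : 0 < ε) (hL : 0 < Real.log (1 / ε)) :
    nuGauss r ε ^ (r + 2) = Real.sqrt (ε / Real.log (1 / ε)) := by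
  rw [nuGauss, ← Real.rpow_natCast, ← Real.rpow_mul (div_pos hε hL).le, Real.sqrt_eq_rpow]
  congr 1
  field_simp
  push_cast
  ring

theorem neg_log_nuGauss (hε : 0 < ε) (hL : 0 < Real.log (1 / ε)) :
    -Real.log (nuGauss r ε) =
      1 / (2 * ((r : ℝ) + 2)) * (Real.log (1 / ε) + Real.log (Real.log (1 / ε))) := by
  rw [nuGauss, Real.log_rpow (div_pos hε hL), Real.log_div hε.ne' hL.ne',
    show Real.log ε = -Real.log (1 / ε) by rw [one_div, Real.log_inv, neg_neg]]
  ring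

theorem le_neg_log_nuGauss (hε : 0 < ε) (hL : 1 ≤ Real.log (1 / ε)) :
    Real.log (1 / ε) / (2 * ((r : ℝ) + 2)) ≤ -Real.log (nuGauss r ε) := by
  rw [neg_log_nuGauss r hε (by linarith), div_eq_mul_one_div, mul_comm]
  have := Real.log_nonneg hL
  gcongr
  linarith

theorem neg_log_nuGauss_le (hε : 0 < ε) (hL : 1 ≤ Real.log (1 / ε)) :
    -Real.log (nuGauss r ε) ≤ Real.log (1 / ε) := by
  rw [neg_log_nuGauss r hε (by linarith)]
  have := Real.log_le_sub_one_of_pos (by linarith : 0 < Real.log (1 / ε))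
  rw [div_mul_eq_mul_div, one_mul, div_le_iff₀ (by positivity)]
  nlinarith [(Nat.cast_nonneg r : (0 : ℝ) ≤ r)]

theorem etaGauss_le (hε : 0 < ε) (hL : 1 ≤ Real.log (1 / ε)) :
    etaGauss r ε ≤ Real.sqrt (ε * Real.log (1 / ε)) := by
  rw [etaGauss, gaussQinv, one_div (nuGauss r ε), Real.log_inv]
  gcongr
  exact neg_log_nuGauss_le r hε hL

theorem tendsto_etaGauss : Tendsto (etaGauss r) (𝓝[>] 0) (𝓝 0) := by
  refine squeeze_zero' (Eventually.of_forall fun ε => Real.sqrt_nonneg _) ?_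
    tendsto_sqrt_mul_log_inv
  filter_upwards [eventually_pos_and_one_le_log_inv] with ε ⟨hε, hL⟩
  exact etaGauss_le r hε hL

theorem tendsto_deltaGauss : Tendsto (deltaGauss r) (𝓝[>] 0) (𝓝 0) := by
  have h := ((tendsto_rpow_mul_log_inv_rpow one_pos 1).const_mul ((r : ℝ) + 2)).sqrt
  simp only [Real.rpow_one, mul_zero, Real.sqrt_zero, ← mul_assoc] at h
  exact h

theorem eventually_sqrt_mul_log_inv_le_nuGauss :
    ∀ᶠ ε in 𝓝[>] (0 : ℝ), Real.sqrt (ε * Real.log (1 / ε)) ≤ nuGauss r ε := by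
  have hc : 1 / (2 * ((r : ℝ) + 2)) < 1 / 2 := by
    gcongr
    linarith [(Nat.cast_nonneg r : (0 : ℝ) ≤ r)]
  filter_upwards [(isLittleO_nuGauss r hc (1 / 2)).bound one_pos, eventually_pos_and_one_le_log_inv]
    with ε h ⟨hε, hL⟩
  rwa [Real.norm_of_nonneg (by positivity), Real.norm_of_nonneg (nuGauss_pos r hε (by linarith)).le,
    one_mul, ← Real.mul_rpow hε.le (by linarith), ← Real.sqrt_eq_rpow] at h

end nuGauss

section gaussQinv

noncomputable def gaussQinvPoly : ℕ → ℝ[X]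
  | 0 => C (-(1 / 2))
  | k + 1 => X ^ 2 * derivative (gaussQinvPoly k) +
      (C (1 / 2) * X - C ((k : ℝ) + 1)) * gaussQinvPoly k

variable {ε w : ℝ}

theorem hasDerivAt_gaussQinv (hε : 0 < ε) (hw : w ∈ Ioo (0 : ℝ) 1) :
    HasDerivAt (gaussQinv ε) (Real.sqrt ε * (gaussQinvPoly 0).eval (-Real.log w)⁻¹ /
      (w ^ 1 * Real.sqrt (-Real.log w))) w := by
  have hu : 0 < -Real.log w := neg_pos.2 (Real.log_neg hw.1 hw.2)
  have hQ : gaussQinv ε = fun v => Real.sqrt ε * Real.sqrt (-Real.log v) := by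
    funext v
    rw [gaussQinv, one_div, Real.log_inv, Real.sqrt_mul hε.le]
  rw [hQ]
  refine (((Real.hasDerivAt_sqrt hu.ne').comp w
    (Real.hasDerivAt_log hw.1.ne').neg).const_mul _).congr_deriv ?_
  simp only [gaussQinvPoly, eval_C]
  field_simp

theorem hasDerivAt_gaussQinvPoly_quotient (k : ℕ) (hw : w ∈ Ioo (0 : ℝ) 1) :
    HasDerivAt
      (fun v => Real.sqrt ε * (gaussQinvPoly k).eval (-Real.log v)⁻¹ /
        (v ^ (k + 1) * Real.sqrt (-Real.log v)))
      (Real.sqrt ε * (gaussQinvPoly (k + 1)).eval (-Real.log w)⁻¹ /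
        (w ^ (k + 2) * Real.sqrt (-Real.log w))) w := by
  have hw0 := hw.1
  have hu : 0 < -Real.log w := neg_pos.2 (Real.log_neg hw.1 hw.2)
  have hU : HasDerivAt (fun v => -Real.log v) (-w⁻¹) w := (Real.hasDerivAt_log hw0.ne').neg
  set u := -Real.log w
  have hNum : HasDerivAt (fun v => Real.sqrt ε * (gaussQinvPoly k).eval (-Real.log v)⁻¹)
      (Real.sqrt ε * ((gaussQinvPoly k).derivative.eval u⁻¹ * (-(-w⁻¹) / u ^ 2))) w :=
    (((gaussQinvPoly k).hasDerivAt _).comp w (hU.inv hu.ne')).const_mul _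
  have hDen : HasDerivAt (fun v => v ^ (k + 1) * Real.sqrt (-Real.log v))
      ((k + 1 : ℕ) * w ^ k * Real.sqrt u + w ^ (k + 1) * (1 / (2 * Real.sqrt u) * -w⁻¹)) w :=
    (hasDerivAt_pow (k + 1) w).mul ((Real.hasDerivAt_sqrt hu.ne').comp w hU)
  have hs : 0 < Real.sqrt u := Real.sqrt_pos.2 hu
  refine (hNum.div hDen (by positivity)).congr_deriv ?_
  simp only [gaussQinvPoly, eval_add, eval_mul, eval_sub, eval_pow, eval_X, eval_C,
    show -Real.log w = u from rfl]
  have hsq : u = Real.sqrt u ^ 2 := (Real.sq_sqrt hu.le).symm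
  set s := Real.sqrt u
  rw [hsq]
  field_simp
  push_cast
  ring

theorem iteratedDeriv_succ_gaussQinv (hε : 0 < ε) (k : ℕ) (hw : w ∈ Ioo (0 : ℝ) 1) :
    iteratedDeriv (k + 1) (gaussQinv ε) w = Real.sqrt ε *
      (gaussQinvPoly k).eval (-Real.log w)⁻¹ / (w ^ (k + 1) * Real.sqrt (-Real.log w)) := by
  induction k generalizing w with
  | zero => rw [iteratedDeriv_one, (hasDerivAt_gaussQinv hε hw).deriv]
  | succ k ih =>
    rw [iteratedDeriv_succ, ((eventuallyEq_of_mem (isOpen_Ioo.mem_nhds hw)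
      fun v hv => ih hv)).deriv_eq, (hasDerivAt_gaussQinvPoly_quotient k hw).deriv]

end gaussQinv

theorem monotoneOn_sq_mul_neg_log :
    MonotoneOn (fun w : ℝ => w ^ 2 * -Real.log w) (Ioc 0 (Real.exp (-1 / 2))) := by
  refine monotoneOn_of_deriv_nonneg (convex_Ioc _ _) ?_ ?_ ?_
  · exact (continuousOn_pow 2).mul (Real.continuousOn_log.mono fun w hw => hw.1.ne').neg
  · rw [interior_Ioc]
    exact fun w hw => ((differentiableAt_pow 2).mul
      (Real.differentiableAt_log hw.1.ne').neg).differentiableWithinAt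
  · rw [interior_Ioc]
    rintro w ⟨hw0, hw⟩
    have hlog : Real.log w < -1 / 2 := by
      simpa using Real.log_lt_log hw0 hw
    have hD : HasDerivAt (fun w : ℝ => w ^ 2 * -Real.log w)
        (((2 : ℕ) : ℝ) * w ^ 1 * -Real.log w + w ^ 2 * -w⁻¹) w :=
      (hasDerivAt_pow 2 w).mul (Real.hasDerivAt_log hw0.ne').neg
    rw [hD.deriv, show ((2 : ℕ) : ℝ) * w ^ 1 * -Real.log w + w ^ 2 * -w⁻¹ =
      w * (-2 * Real.log w - 1) by field_simp; push_cast; ring]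
    exact mul_nonneg hw0.le (by linarith)

theorem pow_mul_sqrt_neg_log_le {v w : ℝ} (k : ℕ) (hv : 0 < v) (hvw : v ≤ w)
    (hw : w ≤ Real.exp (-1 / 2)) :
    v ^ (k + 1) * Real.sqrt (-Real.log v) ≤ w ^ (k + 1) * Real.sqrt (-Real.log w) := by
  have hsplit : ∀ x : ℝ, 0 < x →
      x ^ (k + 1) * Real.sqrt (-Real.log x) = x ^ k * Real.sqrt (x ^ 2 * -Real.log x) := by
    intro x hx
    rw [Real.sqrt_mul (by positivity), Real.sqrt_sq hx.le, pow_succ, mul_assoc]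
  rw [hsplit v hv, hsplit w (hv.trans_le hvw)]
  exact mul_le_mul (pow_le_pow_left₀ hv.le hvw k) (Real.sqrt_le_sqrt
    (monotoneOn_sq_mul_neg_log ⟨hv, hvw.trans hw⟩ ⟨hv.trans_le hvw, hw⟩ hvw))
    (Real.sqrt_nonneg _) (pow_nonneg (hv.trans_le hvw).le k)

theorem exists_abs_eval_gaussQinvPoly_le (r : ℕ) :
    ∃ K, 0 ≤ K ∧ ∀ k ≤ r, ∀ x : ℝ, |x| ≤ 2 → |(gaussQinvPoly k).eval x| ≤ K := by
  set B : ℕ → ℝ := fun k => (∑ j ∈ Finset.range ((gaussQinvPoly k).natDegree + 1),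
    |(gaussQinvPoly k).coeff j|) * 2 ^ (gaussQinvPoly k).natDegree
  have hB : ∀ k, 0 ≤ B k := fun k => by positivity
  refine ⟨∑ k ∈ Finset.range (r + 1), B k, Finset.sum_nonneg fun k _ => hB k,
    fun k hk x hx => ?_⟩
  calc |(gaussQinvPoly k).eval x| ≤ B k := by
        refine ((gaussQinvPoly k).abs_eval_le_sum_abs_coeff_mul x).trans
          (mul_le_mul_of_nonneg_left (pow_le_pow_left₀ (by positivity) (max_le one_le_two hx) _)
            (by positivity))
    _ ≤ _ := Finset.single_le_sum (fun k _ => hB k) (Finset.mem_range.2 (Nat.lt_succ_of_le hk))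

theorem abs_iteratedDeriv_succ_gaussQinv_le {r : ℕ} {K ε w : ℝ}
    (hK : ∀ k ≤ r, ∀ x : ℝ, |x| ≤ 2 → |(gaussQinvPoly k).eval x| ≤ K)
    (hε : 0 < ε) (hL : 1 ≤ Real.log (1 / ε)) (hν : nuGauss r ε ≤ 1 / 2)
    {k : ℕ} (hk : k ≤ r) (hw : w ∈ Icc (nuGauss r ε) (1 / 2)) :
    |iteratedDeriv (k + 1) (gaussQinv ε) w| ≤
      K * Real.sqrt (2 * ((r : ℝ) + 2)) * nuGauss r ε := by
  set ν := nuGauss r ε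
  set L := Real.log (1 / ε)
  have hL0 : 0 < L := by linarith
  have hν0 : 0 < ν := nuGauss_pos r hε hL0
  have hw0 : 0 < w := hν0.trans_le hw.1
  have hw12 : w ≤ Real.exp (-1 / 2) :=
    hw.2.trans (by linarith [Real.add_one_le_exp (-1 / 2 : ℝ)])
  have hlog2 : Real.log 2 ≤ -Real.log w := by
    rw [← Real.log_inv]
    exact Real.log_le_log two_pos (by rw [le_inv_comm₀ two_pos hw0]; linarith [hw.2])
  have hu : 1 / 2 ≤ -Real.log w := by linarith [Real.log_two_gt_d9]
  have hinv : |(-Real.log w)⁻¹| ≤ 2 := by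
    rw [abs_inv, abs_of_pos (by linarith), inv_le_comm₀ (by linarith) two_pos]
    linarith
  have hden : ν ^ (r + 1) * Real.sqrt (L / (2 * ((r : ℝ) + 2))) ≤
      w ^ (k + 1) * Real.sqrt (-Real.log w) :=
    calc ν ^ (r + 1) * Real.sqrt (L / (2 * ((r : ℝ) + 2)))
        ≤ ν ^ (k + 1) * Real.sqrt (-Real.log ν) :=
          mul_le_mul (pow_le_pow_of_le_one hν0.le (by linarith) (by omega))
            (Real.sqrt_le_sqrt (le_neg_log_nuGauss r hε hL)) (Real.sqrt_nonneg _) (by positivity)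
      _ ≤ w ^ (k + 1) * Real.sqrt (-Real.log w) := pow_mul_sqrt_neg_log_le k hν0 hw.1 hw12
  have hνpow : Real.sqrt ε / Real.sqrt L = ν ^ (r + 2) := by
    rw [nuGauss_pow r hε hL0, Real.sqrt_div hε.le]
  rw [iteratedDeriv_succ_gaussQinv hε k ⟨hw0, by linarith [hw.2]⟩, abs_div,
    abs_mul (Real.sqrt ε), abs_of_nonneg (Real.sqrt_nonneg ε),
    abs_of_pos (a := w ^ (k + 1) * _) (by positivity)]
  calc Real.sqrt ε * |(gaussQinvPoly k).eval (-Real.log w)⁻¹| /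
        (w ^ (k + 1) * Real.sqrt (-Real.log w))
      ≤ Real.sqrt ε * K / (ν ^ (r + 1) * Real.sqrt (L / (2 * ((r : ℝ) + 2)))) := by
        have hK0 : 0 ≤ K := (abs_nonneg _).trans (hK k hk _ hinv)
        gcongr
        exact hK k hk _ hinv
    _ = K * Real.sqrt (2 * ((r : ℝ) + 2)) * ν := by
        rw [div_eq_iff (by positivity)] at hνpow
        rw [Real.sqrt_div hL0.le, hνpow]
        field_simp
        ring

theorem Mbig_gaussQinv_le {r : ℕ} {K ε : ℝ}
    (hK : ∀ k ≤ r, ∀ x : ℝ, |x| ≤ 2 → |(gaussQinvPoly k).eval x| ≤ K) (hK0 : 0 ≤ K)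
    (hε : 0 < ε) (hL : 1 ≤ Real.log (1 / ε)) (hν : nuGauss r ε ≤ 1 / 2)
    (hsqrt : Real.sqrt (ε * Real.log (1 / ε)) ≤ nuGauss r ε) :
    Mbig (gaussQinv ε) r (nuGauss r ε) ≤
      (1 + K * Real.sqrt (2 * ((r : ℝ) + 2))) * nuGauss r ε := by
  have hν0 := nuGauss_pos r hε (by linarith)
  have hC : 1 ≤ 1 + K * Real.sqrt (2 * ((r : ℝ) + 2)) := by
    have := Real.sqrt_nonneg (2 * ((r : ℝ) + 2))
    nlinarith
  refine Real.sSup_le ?_ (by positivity)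
  rintro _ ⟨l, hl, w, hw, rfl⟩
  rcases l with _ | k
  · have hQ0 : 0 ≤ gaussQinv ε w := Real.sqrt_nonneg _
    rw [iteratedDeriv_zero, abs_of_nonneg hQ0]
    calc gaussQinv ε w ≤ etaGauss r ε :=
          Real.sqrt_le_sqrt (mul_le_mul_of_nonneg_left (Real.log_le_log
            (one_div_pos.2 (hν0.trans_le hw.1))
            (one_div_le_one_div_of_le hν0 hw.1)) hε.le)
      _ ≤ nuGauss r ε := (etaGauss_le r hε hL).trans hsqrt
      _ ≤ _ := le_mul_of_one_le_left hν0.le hC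
  · calc _ ≤ K * Real.sqrt (2 * ((r : ℝ) + 2)) * nuGauss r ε :=
          abs_iteratedDeriv_succ_gaussQinv_le hK hε hL hν (by omega) hw
      _ ≤ _ := by gcongr; linarith

section gaussW

variable {ε : ℝ}

theorem iteratedDeriv_gaussW (hε : 0 < ε) (l : ℕ) (Q : ℝ) :
    iteratedDeriv l (gaussW ε) Q = Real.sqrt (2 / ε) ^ l * ((-1) ^ l *
      aeval (Real.sqrt (2 / ε) * Q) (hermite l) *
        Real.exp (-((Real.sqrt (2 / ε) * Q) ^ 2 / 2))) := by
  have hW : gaussW ε = fun Q => Real.exp (-((Real.sqrt (2 / ε) * Q) ^ 2 / 2)) := by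
    funext Q
    rw [gaussW, mul_pow, Real.sq_sqrt (by positivity)]
    congr 1
    field_simp
  rw [hW, iteratedDeriv_comp_const_mul (f := fun y => Real.exp (-(y ^ 2 / 2))) (by fun_prop),
    iteratedDeriv_eq_iterate]
  exact congrArg _ (deriv_gaussian_eq_hermite_mul_gaussian l _)

theorem exists_abs_aeval_hermite_le (l : ℕ) :
    ∃ S, ∀ t : ℝ, 1 ≤ t → |aeval t (hermite l)| ≤ S * t ^ l := by
  set p : ℝ[X] := (hermite l).map (Int.castRingHom ℝ)
  refine ⟨∑ j ∈ Finset.range (p.natDegree + 1), |p.coeff j|, fun t ht => ?_⟩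
  have hdeg : p.natDegree ≤ l := (natDegree_map_le).trans natDegree_hermite.le
  rw [aeval_def, eval₂_eq_eval_map, algebraMap_int_eq]
  refine (p.abs_eval_le_sum_abs_coeff_mul t).trans ?_
  rw [abs_of_nonneg (by linarith), max_eq_right ht]
  gcongr

theorem iteratedDeriv_gaussW_deltaGauss (r l : ℕ) (hε : 0 < ε) (hL : 0 ≤ Real.log (1 / ε)) :
    iteratedDeriv l (gaussW ε) (deltaGauss r ε) = Real.sqrt (2 / ε) ^ l *
      ((-1) ^ l * aeval (Real.sqrt (2 / ε) * deltaGauss r ε) (hermite l) * ε ^ (r + 2)) := by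
  have hsq : (Real.sqrt (2 / ε) * deltaGauss r ε) ^ 2 = 2 * ((r : ℝ) + 2) * Real.log (1 / ε) := by
    rw [mul_pow, Real.sq_sqrt (by positivity), deltaGauss, Real.sq_sqrt (by positivity)]
    field_simp
  have hlog : Real.log ε = -Real.log (1 / ε) := by rw [one_div, Real.log_inv, neg_neg]
  rw [iteratedDeriv_gaussW hε, hsq, show -(2 * ((r : ℝ) + 2) * Real.log (1 / ε) / 2) =
    ((r + 2 : ℕ) : ℝ) * Real.log ε by rw [hlog]; push_cast; ring, Real.exp_nat_mul,
    Real.exp_log hε]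

theorem abs_iteratedDeriv_gaussW_deltaGauss_le {r l : ℕ} {S : ℝ}
    (hS : ∀ t : ℝ, 1 ≤ t → |aeval t (hermite l)| ≤ S * t ^ l)
    (hε : 0 < ε) (hL : 1 ≤ Real.log (1 / ε)) (hl : l ≤ r + 1) :
    |iteratedDeriv l (gaussW ε) (deltaGauss r ε)| ≤
      S * (4 * ((r : ℝ) + 2)) ^ (r + 1) * (ε * Real.log (1 / ε) ^ (r + 1)) := by
  rw [iteratedDeriv_gaussW_deltaGauss r l hε (by linarith)]
  have hε1 := lt_one_of_one_le_log_inv hε hL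
  have hδ : deltaGauss r ε ^ 2 = ((r : ℝ) + 2) * ε * Real.log (1 / ε) :=
    Real.sq_sqrt (by positivity)
  set L := Real.log (1 / ε)
  set s := Real.sqrt (2 / ε)
  set t := s * deltaGauss r ε
  have hS0 : 0 ≤ S := by simpa using (abs_nonneg _).trans (hS 1 le_rfl)
  have hs0 : 0 ≤ s := Real.sqrt_nonneg _
  have hs2 : s ^ 2 = 2 / ε := Real.sq_sqrt (by positivity)
  have hst2 : (s * t) ^ 2 * ε = 4 * ((r : ℝ) + 2) * L := by
    rw [mul_pow, mul_pow, hs2, hδ]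
    field_simp
    ring
  have ht1 : 1 ≤ t := by
    have ht2 : t ^ 2 = 2 * ((r : ℝ) + 2) * L := by
      rw [mul_pow, hs2, hδ]
      field_simp
    have ht0 : 0 ≤ t := mul_nonneg hs0 (Real.sqrt_nonneg _)
    nlinarith [(Nat.cast_nonneg r : (0 : ℝ) ≤ r)]
  have hst : 1 ≤ s * t := one_le_mul_of_one_le_of_one_le
    (Real.one_le_sqrt.2 (by rw [le_div_iff₀ hε]; linarith)) ht1
  simp only [abs_mul, abs_pow, abs_neg, abs_one, one_pow, one_mul, abs_of_nonneg hs0,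
    abs_of_pos hε]
  calc s ^ l * (|aeval t (hermite l)| * ε ^ (r + 2))
      ≤ s ^ l * (S * t ^ l * ε ^ (r + 2)) := by gcongr; exact hS t ht1
    _ = S * (s * t) ^ l * ε ^ (r + 2) := by ring
    _ ≤ S * (s * t) ^ (2 * (r + 1)) * ε ^ (r + 2) := by
        gcongr
        omega
    _ = S * ((s * t) ^ 2 * ε) ^ (r + 1) * ε := by ring
    _ = S * (4 * ((r : ℝ) + 2)) ^ (r + 1) * (ε * L ^ (r + 1)) := by rw [hst2, mul_pow]; ring

theorem eventually_abs_iteratedDeriv_gaussW_deltaGauss_le (r : ℕ) {l : ℕ} (hl : l ≤ r + 1) :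
    ∀ᶠ ε in 𝓝[>] (0 : ℝ), |iteratedDeriv l (gaussW ε) (deltaGauss r ε)| ≤ nuGauss r ε := by
  obtain ⟨S, hS⟩ := exists_abs_aeval_hermite_le l
  have hc : 1 / (2 * ((r : ℝ) + 2)) < 1 := by
    rw [div_lt_one (by positivity)]
    linarith [(Nat.cast_nonneg r : (0 : ℝ) ≤ r)]
  have hO : (fun ε => iteratedDeriv l (gaussW ε) (deltaGauss r ε)) =O[𝓝[>] 0]
      (fun ε : ℝ => ε ^ (1 : ℝ) * Real.log (1 / ε) ^ ((r + 1 : ℕ) : ℝ)) := by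
    refine IsBigO.of_bound (S * (4 * ((r : ℝ) + 2)) ^ (r + 1)) ?_
    filter_upwards [eventually_pos_and_one_le_log_inv] with ε ⟨hε, hL⟩
    rw [Real.norm_eq_abs, Real.norm_of_nonneg (by positivity), Real.rpow_one, Real.rpow_natCast]
    exact abs_iteratedDeriv_gaussW_deltaGauss_le hS hε hL hl
  filter_upwards [(hO.trans_isLittleO (isLittleO_nuGauss r hc _)).bound one_pos,
    eventually_pos_and_one_le_log_inv] with ε h ⟨hε, hL⟩
  rwa [Real.norm_eq_abs, Real.norm_of_nonneg (nuGauss_pos r hε (by linarith)).le, one_mul] at h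

end gaussW

theorem stmt_7_general (r : ℕ) :
    (∃ C > (0:ℝ), ∃ ε₀ ∈ Set.Ioo (0:ℝ) 1, ∀ ε ∈ Set.Ioo (0:ℝ) ε₀,
      Mbig (gaussQinv ε) r (nuGauss r ε) ≤ C * nuGauss r ε ∧
      (∀ l : ℕ, 1 ≤ l → l ≤ r + 1 →
        |iteratedDeriv l (gaussW ε) (deltaGauss r ε)| ≤ C * nuGauss r ε) ∧
      etaGauss r ε ≤ Real.sqrt (ε * Real.log (1 / ε))) ∧
    Tendsto (nuGauss r) (𝓝[>] (0:ℝ)) (𝓝 0) ∧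
    Tendsto (deltaGauss r) (𝓝[>] (0:ℝ)) (𝓝 0) ∧
    Tendsto (etaGauss r) (𝓝[>] (0:ℝ)) (𝓝 0) := by
  refine ⟨?_, tendsto_nuGauss r, tendsto_deltaGauss r, tendsto_etaGauss r⟩
  obtain ⟨K, hK0, hK⟩ := exists_abs_eval_gaussQinvPoly_le r
  set C := 1 + K * Real.sqrt (2 * ((r : ℝ) + 2))
  have hC : 1 ≤ C := le_add_of_nonneg_right (by positivity)
  refine ⟨C, by positivity, exists_Ioo_forall_of_eventually_nhdsGT ?_⟩
  have hWev := (Set.finite_Iic (r + 1)).eventually_all.2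
    fun l hl => eventually_abs_iteratedDeriv_gaussW_deltaGauss_le r (Set.mem_Iic.1 hl)
  filter_upwards [eventually_pos_and_one_le_log_inv,
    (tendsto_nuGauss r).eventually (eventually_le_nhds one_half_pos),
    eventually_sqrt_mul_log_inv_le_nuGauss r, hWev] with ε ⟨hε, hL⟩ hν hsqrt hW
  have hν0 := nuGauss_pos r hε (by linarith)
  exact ⟨Mbig_gaussQinv_le hK hK0 hε hL hν hsqrt,
    fun l _ hl => (hW l hl).trans (le_mul_of_one_le_left hν0.le hC), etaGauss_le r hε hL⟩

/-- **Error estimates for the Gaussian barrier `W(Q;ε) = e^{-Q²/ε}`.**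
With `ν(ε) = (ε/ln(1/ε))^{1/(2(r+2))}` and `δ(ε) = √((r+2) ε ln(1/ε))`, eventually
`M^{(r)}(ν(ε);ε) ≤ C ν(ε)`, all the derivatives `∂_Q^l W(δ(ε);ε)`, `1 ≤ l ≤ r+1`, are
bounded by `C ν(ε)`, and `η(ε) ≤ √(ε ln(1/ε))`. In particular `ν, δ, η → 0` as `ε → 0⁺`. -/
theorem stmt_7 (r : ℕ) (hr : 1 ≤ r) :
    (∃ C > (0:ℝ), ∃ ε₀ ∈ Set.Ioo (0:ℝ) 1, ∀ ε ∈ Set.Ioo (0:ℝ) ε₀,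
      Mbig (gaussQinv ε) r (nuGauss r ε) ≤ C * nuGauss r ε ∧
      (∀ l : ℕ, 1 ≤ l → l ≤ r + 1 →
        |iteratedDeriv l (gaussW ε) (deltaGauss r ε)| ≤ C * nuGauss r ε) ∧
      etaGauss r ε ≤ Real.sqrt (ε * Real.log (1 / ε))) ∧
    Tendsto (nuGauss r) (𝓝[>] (0:ℝ)) (𝓝 0) ∧
    Tendsto (deltaGauss r) (𝓝[>] (0:ℝ)) (𝓝 0) ∧
    Tendsto (etaGauss r) (𝓝[>] (0:ℝ)) (𝓝 0) :=
  stmt_7_general r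
end

section
/- Let n, m, k ≥ 1 be integers, K ≥ 1, and h ∈ (0,1]. Let F₀, F₁, F : ℝⁿ → ℝᵐ and R₀, R₁, R : ℝᵐ → ℝᵏ be maps such that: R₀ is differentiable with ‖DR₀(y)‖ ≤ K and ‖DR₀(y) − DR₀(y')‖ ≤ K‖y − y'‖ for all y, y'; sup_x ‖F(x) − F₀(x) − F₁(x)‖ ≤ Kh² and sup_x ‖F₁(x)‖ ≤ Kh; sup_y ‖R(y) − R₀(y) − R₁(y)‖ ≤ Kh² and ‖R₁(y) − R₁(y')‖ ≤ Kh‖y − y'‖ for all y, y'. Then there exists a constant C depending only on K such that sup_x ‖ R(F(x)) − R₀(F₀(x)) − DR₀(F₀(x))[F₁(x)] − R₁(F₀(x)) ‖ ≤ C h². -/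
open Set

lemma taylor_aux {E F : Type*} [NormedAddCommGroup E] [NormedSpace ℝ E]
    [NormedAddCommGroup F] [NormedSpace ℝ F] (f : E → F) (K : ℝ) (hK : 0 ≤ K)
    (hf : Differentiable ℝ f)
    (hlip : ∀ y y', ‖fderiv ℝ f y - fderiv ℝ f y'‖ ≤ K * ‖y - y'‖)
    (a b : E) : ‖f b - f a - fderiv ℝ f a (b - a)‖ ≤ K * ‖b - a‖ ^ 2 := by
  have hseg : segment ℝ a b ⊆ Metric.closedBall a ‖b - a‖ := by
    apply (convex_closedBall a ‖b - a‖).segment_subset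
    · simp
    · simp [Metric.mem_closedBall, dist_eq_norm, norm_sub_rev]
  have := Convex.norm_image_sub_le_of_norm_fderiv_le' (f := f)
    (φ := fderiv ℝ f a) (C := K * ‖b - a‖) (s := segment ℝ a b)
    (fun x _ => hf x)
    (fun x hx => by
      refine (hlip x a).trans ?_
      have : ‖x - a‖ ≤ ‖b - a‖ := by
        have := hseg hx
        simpa [Metric.mem_closedBall, dist_eq_norm] using this
      nlinarith)
    (convex_segment a b) (left_mem_segment ℝ a b) (right_mem_segment ℝ a b)
  calc ‖f b - f a - fderiv ℝ f a (b - a)‖ ≤ K * ‖b - a‖ * ‖b - a‖ := this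
    _ = K * ‖b - a‖ ^ 2 := by ring

/-- **Composition expansion lemma** underlying the first-order approximation of the
Poincaré map `Φ = R ∘ F` by the auxiliary billiard map `B = R₀ ∘ F₀` plus the first-order
correction `Φ₁ = DR₀(F₀)·F₁ + R₁ ∘ F₀`: if `F = F₀ + F₁ + O(h²)` with `F₁ = O(h)` and
`R = R₀ + R₁ + O(h²)` with `R₁` having Lipschitz constant `O(h)`, and `DR₀` is bounded
and Lipschitz, then `R ∘ F = R₀ ∘ F₀ + DR₀(F₀)·F₁ + R₁ ∘ F₀ + O(h²)`, with a constant
depending only on `K`. -/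
theorem stmt_12 (K : ℝ) (hK : 1 ≤ K) :
    ∃ C : ℝ, 0 < C ∧
      ∀ (n m k : ℕ), 1 ≤ n → 1 ≤ m → 1 ≤ k →
      ∀ h : ℝ, 0 < h → h ≤ 1 →
      ∀ (F₀ F₁ F : EuclideanSpace ℝ (Fin n) → EuclideanSpace ℝ (Fin m))
        (R₀ R₁ R : EuclideanSpace ℝ (Fin m) → EuclideanSpace ℝ (Fin k)),
        Differentiable ℝ R₀ →
        (∀ y, ‖fderiv ℝ R₀ y‖ ≤ K) →
        (∀ y y', ‖fderiv ℝ R₀ y - fderiv ℝ R₀ y'‖ ≤ K * ‖y - y'‖) →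
        (∀ x, ‖F x - F₀ x - F₁ x‖ ≤ K * h ^ 2) →
        (∀ x, ‖F₁ x‖ ≤ K * h) →
        (∀ y, ‖R y - R₀ y - R₁ y‖ ≤ K * h ^ 2) →
        (∀ y y', ‖R₁ y - R₁ y'‖ ≤ K * h * ‖y - y'‖) →
        ∀ x, ‖R (F x) - R₀ (F₀ x) - (fderiv ℝ R₀ (F₀ x)) (F₁ x) - R₁ (F₀ x)‖
          ≤ C * h ^ 2 := by
  refine ⟨9 * K ^ 3, by positivity, ?_⟩
  intro n m k _ _ _ h hh0 hh1 F₀ F₁ F R₀ R₁ R hdiff hDb hDlip hFexp hF₁ hRexp hR₁lip x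
  have hK0 : (0:ℝ) < K := by linarith
  have hΔ : ‖F x - F₀ x‖ ≤ 2 * K * h := by
    have h1 := hFexp x
    have h2 := hF₁ x
    have : ‖F x - F₀ x‖ ≤ ‖F x - F₀ x - F₁ x‖ + ‖F₁ x‖ := by
      have := norm_add_le (F x - F₀ x - F₁ x) (F₁ x)
      simpa using this
    have hh2 : h ^ 2 ≤ h := by nlinarith
    nlinarith
  -- decomposition
  have key : R (F x) - R₀ (F₀ x) - (fderiv ℝ R₀ (F₀ x)) (F₁ x) - R₁ (F₀ x)
      = (R (F x) - R₀ (F x) - R₁ (F x))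
      + (R₁ (F x) - R₁ (F₀ x))
      + (R₀ (F x) - R₀ (F₀ x) - (fderiv ℝ R₀ (F₀ x)) (F x - F₀ x))
      + (fderiv ℝ R₀ (F₀ x)) (F x - F₀ x - F₁ x) := by
    simp only [map_sub]
    abel
  rw [key]
  have b1 : ‖R (F x) - R₀ (F x) - R₁ (F x)‖ ≤ K * h ^ 2 := hRexp (F x)
  have b2 : ‖R₁ (F x) - R₁ (F₀ x)‖ ≤ 2 * K ^ 2 * h ^ 2 := by
    refine (hR₁lip (F x) (F₀ x)).trans ?_
    calc K * h * ‖F x - F₀ x‖ ≤ K * h * (2 * K * h) := by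
          apply mul_le_mul_of_nonneg_left hΔ (by positivity)
      _ = 2 * K ^ 2 * h ^ 2 := by ring
  have b3 : ‖R₀ (F x) - R₀ (F₀ x) - (fderiv ℝ R₀ (F₀ x)) (F x - F₀ x)‖
      ≤ 4 * K ^ 3 * h ^ 2 := by
    have := taylor_aux R₀ K (by linarith) hdiff hDlip (F₀ x) (F x)
    have hsq : ‖F x - F₀ x‖ ^ 2 ≤ (2 * K * h) ^ 2 := by
      nlinarith [norm_nonneg (F x - F₀ x)]
    nlinarith
  have b4 : ‖(fderiv ℝ R₀ (F₀ x)) (F x - F₀ x - F₁ x)‖ ≤ K ^ 2 * h ^ 2 := by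
    have := (fderiv ℝ R₀ (F₀ x)).le_opNorm (F x - F₀ x - F₁ x)
    have h1 := hDb (F₀ x)
    have h2 := hFexp x
    nlinarith [norm_nonneg (F x - F₀ x - F₁ x), norm_nonneg (fderiv ℝ R₀ (F₀ x))]
  have t1 := norm_add_le (R (F x) - R₀ (F x) - R₁ (F x) + (R₁ (F x) - R₁ (F₀ x))
      + (R₀ (F x) - R₀ (F₀ x) - (fderiv ℝ R₀ (F₀ x)) (F x - F₀ x)))
      ((fderiv ℝ R₀ (F₀ x)) (F x - F₀ x - F₁ x))
  have t2 := norm_add_le (R (F x) - R₀ (F x) - R₁ (F x) + (R₁ (F x) - R₁ (F₀ x)))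
      (R₀ (F x) - R₀ (F₀ x) - (fderiv ℝ R₀ (F₀ x)) (F x - F₀ x))
  have t3 := norm_add_le (R (F x) - R₀ (F x) - R₁ (F x)) (R₁ (F x) - R₁ (F₀ x))
  have hp : (0:ℝ) ≤ h ^ 2 := sq_nonneg h
  have e1 : K * h ^ 2 ≤ K ^ 3 * h ^ 2 :=
    mul_le_mul_of_nonneg_right (by nlinarith) hp
  have e2 : K ^ 2 * h ^ 2 ≤ K ^ 3 * h ^ 2 :=
    mul_le_mul_of_nonneg_right (by nlinarith) hp
  have e3 : (0:ℝ) ≤ K ^ 3 * h ^ 2 := by positivity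
  linarith
end

section
/- Let d ≥ 1, let n ∈ ℝ^d be a unit vector, let 0 < a ≤ 1 and μ ≥ 0. Let u, v ∈ ℝ^d satisfy ‖u‖ = ‖v‖ ≤ 1. Write u_y = ⟨u, n⟩, u_x = u − u_y n, and similarly v_y = ⟨v, n⟩, v_x = v − v_y n. Assume u_y ≤ −a, v_y > 0, and ‖v_x − u_x‖ ≤ μ. Then |v_y + u_y| ≤ 2μ/a, and consequently ‖v − (u − 2⟨u, n⟩ n)‖ ≤ (1 + 2/a) μ. -/
open Set
open scoped RealInnerProductSpace

/-- **Elastic reflection from conservation laws.** If `‖u‖ = ‖v‖ ≤ 1`, the normal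
components satisfy `⟨u,n⟩ ≤ -a < 0 < ⟨v,n⟩`, and the tangential components differ by at
most `μ`, then `|⟨v,n⟩ + ⟨u,n⟩| ≤ 2μ/a` and `v` is `(1 + 2/a)μ`-close to the elastic
specular reflection `u - 2⟨u,n⟩n`. -/
theorem stmt_13 (d : ℕ) (hd : 1 ≤ d) (n u v : EuclideanSpace ℝ (Fin d))
    (hn : ‖n‖ = 1) (a μ : ℝ) (ha : 0 < a) (ha1 : a ≤ 1) (hμ : 0 ≤ μ)
    (huv : ‖u‖ = ‖v‖) (hv1 : ‖v‖ ≤ 1)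
    (huy : ⟪u, n⟫ ≤ -a) (hvy : 0 < ⟪v, n⟫)
    (hx : ‖(v - ⟪v, n⟫ • n) - (u - ⟪u, n⟫ • n)‖ ≤ μ) :
    |⟪v, n⟫ + ⟪u, n⟫| ≤ 2 * μ / a ∧
    ‖v - (u - (2 * ⟪u, n⟫) • n)‖ ≤ (1 + 2 / a) * μ := by
  set uy := ⟪u, n⟫ with huydef
  set vy := ⟪v, n⟫ with hvydef
  set ux := u - uy • n with huxdef
  set vx := v - vy • n with hvxdef
  have hn2 : ⟪n, n⟫ = (1 : ℝ) := by
    rw [real_inner_self_eq_norm_sq, hn]; norm_num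
  have hux_orth : ⟪ux, n⟫ = 0 := by
    rw [huxdef, inner_sub_left, real_inner_smul_left, hn2]; ring
  have hvx_orth : ⟪vx, n⟫ = 0 := by
    rw [hvxdef, inner_sub_left, real_inner_smul_left, hn2]; ring
  have hu_eq : u = ux + uy • n := by rw [huxdef]; abel
  have hv_eq : v = vx + vy • n := by rw [hvxdef]; abel
  have hsmul : ∀ t : ℝ, ‖t • n‖ ^ 2 = t ^ 2 := by
    intro t; rw [norm_smul, hn]; simp [mul_pow, sq_abs]
  have hu_pyth : ‖u‖ ^ 2 = ‖ux‖ ^ 2 + uy ^ 2 := by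
    rw [hu_eq, norm_add_sq_real, real_inner_smul_right, hux_orth, hsmul]; ring
  have hv_pyth : ‖v‖ ^ 2 = ‖vx‖ ^ 2 + vy ^ 2 := by
    rw [hv_eq, norm_add_sq_real, real_inner_smul_right, hvx_orth, hsmul]; ring
  have hux1 : ‖ux‖ ≤ 1 := by
    nlinarith [norm_nonneg ux, norm_nonneg u, sq_nonneg uy, huv, hv1]
  have hvx1 : ‖vx‖ ≤ 1 := by
    nlinarith [norm_nonneg vx, norm_nonneg v, sq_nonneg vy, hv1]
  have hdiff : vy ^ 2 - uy ^ 2 = ‖ux‖ ^ 2 - ‖vx‖ ^ 2 := by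
    have h : ‖u‖ ^ 2 = ‖v‖ ^ 2 := by rw [huv]
    linarith [hu_pyth, hv_pyth]
  have hnormsub : |‖vx‖ - ‖ux‖| ≤ μ := (abs_norm_sub_norm_le vx ux).trans hx
  have hkey : |vy + uy| * a ≤ 2 * μ := by
    have hsep : a ≤ vy - uy := by linarith
    have h1 : |vy + uy| * a ≤ |vy + uy| * (vy - uy) := by
      exact mul_le_mul_of_nonneg_left hsep (abs_nonneg _)
    have h2 : |vy + uy| * (vy - uy) = |vy ^ 2 - uy ^ 2| := by
      rw [← abs_of_pos (show (0:ℝ) < vy - uy by linarith), ← abs_mul]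
      ring_nf
    have h3 : |vy ^ 2 - uy ^ 2| ≤ 2 * μ := by
      rw [hdiff]
      have : |‖ux‖ ^ 2 - ‖vx‖ ^ 2| = |‖ux‖ - ‖vx‖| * |‖ux‖ + ‖vx‖| := by
        rw [← abs_mul]; ring_nf
      rw [this]
      have h4 : |‖ux‖ - ‖vx‖| ≤ μ := by rw [abs_sub_comm]; exact hnormsub
      have h5 : |‖ux‖ + ‖vx‖| ≤ 2 := by
        rw [abs_of_nonneg (by positivity)]; linarith
      calc |‖ux‖ - ‖vx‖| * |‖ux‖ + ‖vx‖| ≤ μ * 2 :=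
            mul_le_mul h4 h5 (abs_nonneg _) hμ
        _ = 2 * μ := by ring
    linarith [h1, h2 ▸ h1, h2, h3]
  have habs : |vy + uy| ≤ 2 * μ / a := by
    rw [le_div_iff₀ ha]; linarith [hkey]
  refine ⟨habs, ?_⟩
  have hdecomp : v - (u - (2 * uy) • n) = (vx - ux) + (vy + uy) • n := by
    rw [huxdef, hvxdef]; module
  rw [hdecomp]
  calc ‖(vx - ux) + (vy + uy) • n‖ ≤ ‖vx - ux‖ + ‖(vy + uy) • n‖ := norm_add_le _ _
    _ ≤ μ + 2 * μ / a := by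
        rw [norm_smul, hn, mul_one]
        exact add_le_add hx habs
    _ = (1 + 2 / a) * μ := by field_simp
end
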